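/- arXiv:1410.5577 — 6 statements merged into one kernel-verified Lean document; each statement's English description precedes it below -/
import Mathlib

section
/- A unit speed regular curve x : I → ℝⁿ (not through the origin) is of constant ratio with ‖x^T‖ : ‖x‖ = c if and only if ‖grad ρ‖ = c, where ρ = ‖x‖. Moreover for any such curve c ≤ 1. -/
open scoped RealInnerProductSpace

lemma norm_hasDerivAt {n : ℕ} {x : ℝ → EuclideanSpace ℝ (Fin n)} {T : EuclideanSpace ℝ (Fin n)}
    {s : ℝ} (hT : HasDerivAt x T s) (hx : x s ≠ 0) :
    HasDerivAt (fun t => ‖x t‖) (⟪x s, T⟫ / ‖x s‖) s := by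
  have h1 : HasDerivAt (fun t => ‖x t‖ ^ 2) (2 * ⟪x s, T⟫) s := hT.norm_sq
  have h2 : HasDerivAt (fun t => Real.sqrt (‖x t‖ ^ 2))
      (2 * ⟪x s, T⟫ / (2 * Real.sqrt (‖x s‖ ^ 2))) s := by
    exact h1.sqrt (pow_ne_zero 2 (norm_ne_zero_iff.mpr hx))
  have heq : (fun t => Real.sqrt (‖x t‖ ^ 2)) = fun t => ‖x t‖ := by
    funext t; rw [Real.sqrt_sq (norm_nonneg _)]
  rw [heq, Real.sqrt_sq (norm_nonneg _)] at h2
  convert h2 using 1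
  have : ‖x s‖ ≠ 0 := norm_ne_zero_iff.mpr hx
  field_simp

/-- A unit speed curve x in ℝⁿ not through the origin is of
constant ratio with ‖x^T‖ : ‖x‖ = c iff ‖grad ρ‖ = |ρ'| = c along the curve;
moreover such a constant c satisfies c ≤ 1. -/
theorem stmt3
    (n : ℕ) (I : Set ℝ) (x T : ℝ → EuclideanSpace ℝ (Fin n)) (c : ℝ)
    (hT : ∀ s ∈ I, HasDerivAt x (T s) s)
    (hunit : ∀ s ∈ I, ‖T s‖ = 1)
    (hx0 : ∀ s ∈ I, x s ≠ 0) :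
    ((∀ s ∈ I, ‖⟪x s, T s⟫ • T s‖ = c * ‖x s‖) ↔
      (∀ s ∈ I, |deriv (fun t => ‖x t‖) s| = c)) ∧
    (I.Nonempty → (∀ s ∈ I, ‖⟪x s, T s⟫ • T s‖ = c * ‖x s‖) → c ≤ 1) := by
  have hderiv : ∀ s ∈ I, deriv (fun t => ‖x t‖) s = ⟪x s, T s⟫ / ‖x s‖ := fun s hs =>
    (norm_hasDerivAt (hT s hs) (hx0 s hs)).deriv
  have hnorm : ∀ s ∈ I, ‖⟪x s, T s⟫ • T s‖ = |⟪x s, T s⟫| := by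
    intro s hs
    rw [norm_smul, hunit s hs, Real.norm_eq_abs, mul_one]
  have hpos : ∀ s ∈ I, (0:ℝ) < ‖x s‖ := fun s hs => norm_pos_iff.mpr (hx0 s hs)
  constructor
  · constructor
    · intro h s hs
      rw [hderiv s hs, abs_div, abs_of_pos (hpos s hs), ← hnorm s hs, h s hs,
        mul_div_assoc, div_self (hpos s hs).ne', mul_one]
    · intro h s hs
      have := h s hs
      rw [hderiv s hs, abs_div, abs_of_pos (hpos s hs)] at this
      rw [hnorm s hs, ← this, div_mul_cancel₀ _ (hpos s hs).ne']
  · rintro ⟨s, hs⟩ h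
    have h1 := h s hs
    rw [hnorm s hs] at h1
    have h2 : |⟪x s, T s⟫| ≤ ‖x s‖ := by
      calc |⟪x s, T s⟫| ≤ ‖x s‖ * ‖T s‖ := abs_real_inner_le_norm _ _
        _ = ‖x s‖ := by rw [hunit s hs, mul_one]
    rw [h1] at h2
    exact le_of_mul_le_mul_right (by simpa using h2) (hpos s hs)
end

section
/- For real numbers a, c with 0 ≤ a ≤ c < 1, the curve x(s) = (√(c²−a²)·s·sin(u(s)), √(c²−a²)·s·cos(u(s)), a·s) in ℝ³, where u(s) = (√(1−c²)/√(c²−a²))·ln s for s > 0, is a unit speed curve and satisfies ‖grad ρ‖ = c, where ρ(s) = ‖x(s)‖. -/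
/-! With `k = √(c² - a²)` and `ω = √(1 - c²) / k`, the curve is
`s ↦ (k s sin(ω log s), k s cos(ω log s), a s)`. Because `k² + a² = c²` it runs along the cone
`‖x‖ = c s`, so `ρ' = c`. Its velocity is the constant vector `(k, k ω, a)` rotated in the
horizontal plane by the angle `ω log s`, hence has length `√(k² + k² ω² + a²) = 1`. -/

open Real

theorem HasDerivAt.toLp {𝕜 ι : Type*} [NontriviallyNormedField 𝕜] [Fintype ι] {E : ι → Type*}
    [∀ i, NormedAddCommGroup (E i)] [∀ i, NormedSpace 𝕜 (E i)] {p : ENNReal} [Fact (1 ≤ p)]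
    {f : 𝕜 → ∀ i, E i} {f' : ∀ i, E i} {t : 𝕜} (hf : HasDerivAt f f' t) :
    HasDerivAt (fun s => WithLp.toLp p (f s)) (WithLp.toLp p f') t :=
  (PiLp.hasFDerivAt_toLp p (f t)).comp_hasDerivAt t hf

theorem EuclideanSpace.norm_rotate_sin_cos (p q φ z : ℝ) :
    ‖!₂[p * sin φ + q * cos φ, p * cos φ - q * sin φ, z]‖ = √(p ^ 2 + q ^ 2 + z ^ 2) := by
  rw [EuclideanSpace.norm_eq]
  congr 1
  simp only [norm_eq_abs, sq_abs, Fin.sum_univ_three, Fin.isValue, Matrix.cons_val_zero,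
    Matrix.cons_val_one, Matrix.cons_val, add_left_inj]
  linear_combination (p ^ 2 + q ^ 2) * sin_sq_add_cos_sq φ

noncomputable def conicalSpiral (k ω a t : ℝ) : EuclideanSpace ℝ (Fin 3) :=
  !₂[k * t * sin (ω * log t), k * t * cos (ω * log t), a * t]

theorem norm_conicalSpiral (k ω a : ℝ) {t : ℝ} (ht : 0 ≤ t) :
    ‖conicalSpiral k ω a t‖ = √(k ^ 2 + a ^ 2) * t := by
  have h := EuclideanSpace.norm_rotate_sin_cos (k * t) 0 (ω * log t) (a * t)
  simp only [zero_mul, add_zero, sub_zero] at h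
  rw [conicalSpiral, h, show (k * t) ^ 2 + 0 ^ 2 + (a * t) ^ 2 = (k ^ 2 + a ^ 2) * t ^ 2 by ring,
    sqrt_mul (by positivity), sqrt_sq ht]

theorem hasDerivAt_conicalSpiral (k ω a : ℝ) {t : ℝ} (ht : 0 < t) :
    HasDerivAt (conicalSpiral k ω a)
      !₂[k * sin (ω * log t) + k * ω * cos (ω * log t),
        k * cos (ω * log t) - k * ω * sin (ω * log t), a] t := by
  have hθ : HasDerivAt (fun s => ω * log s) (ω * t⁻¹) t :=
    (hasDerivAt_log ht.ne').const_mul ω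
  have hr : HasDerivAt (fun s => k * s) k t := by simpa using (hasDerivAt_id t).const_mul k
  have hz : HasDerivAt (fun s => a * s) a t := by simpa using (hasDerivAt_id t).const_mul a
  refine HasDerivAt.toLp (hasDerivAt_pi.2 fun i => ?_)
  fin_cases i
  · refine (hr.mul hθ.sin).congr_deriv ?_
    simp only [Fin.zero_eta, Matrix.cons_val_zero]
    field_simp
  · refine (hr.mul hθ.cos).congr_deriv ?_
    simp only [Fin.mk_one, Matrix.cons_val_one, Matrix.cons_val_zero]
    field_simp
    ring
  · exact hz

theorem norm_deriv_conicalSpiral (k ω a : ℝ) {t : ℝ} (ht : 0 < t) :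
    ‖deriv (conicalSpiral k ω a) t‖ = √(k ^ 2 * (1 + ω ^ 2) + a ^ 2) := by
  rw [(hasDerivAt_conicalSpiral k ω a ht).deriv, EuclideanSpace.norm_rotate_sin_cos]
  ring_nf

theorem deriv_norm_conicalSpiral (k ω a : ℝ) {t : ℝ} (ht : 0 < t) :
    deriv (fun s => ‖conicalSpiral k ω a s‖) t = √(k ^ 2 + a ^ 2) := by
  have h : (fun s => ‖conicalSpiral k ω a s‖) =ᶠ[nhds t] fun s => √(k ^ 2 + a ^ 2) * s := by
    filter_upwards [Ioi_mem_nhds ht] with s hs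
    exact norm_conicalSpiral k ω a hs.le
  rw [h.deriv_eq]
  simp

/-- For 0 ≤ a < c < 1, the curve
x(s) = (√(c²−a²)·s·sin(u s), √(c²−a²)·s·cos(u s), a·s) with
u(s) = (√(1−c²)/√(c²−a²))·ln s, s > 0, is unit speed and satisfies
‖grad ρ‖ = |ρ'| = c where ρ = ‖x‖. -/
theorem stmt4
    (a c : ℝ) (ha : 0 ≤ a) (hac : a < c) (hc : c < 1)
    (x : ℝ → EuclideanSpace ℝ (Fin 3))
    (hx : ∀ s : ℝ, x s = (WithLp.equiv 2 (Fin 3 → ℝ)).symm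
      ![Real.sqrt (c ^ 2 - a ^ 2) * s *
          Real.sin (Real.sqrt (1 - c ^ 2) / Real.sqrt (c ^ 2 - a ^ 2) * Real.log s),
        Real.sqrt (c ^ 2 - a ^ 2) * s *
          Real.cos (Real.sqrt (1 - c ^ 2) / Real.sqrt (c ^ 2 - a ^ 2) * Real.log s),
        a * s]) :
    ∀ s : ℝ, 0 < s →
      ‖deriv x s‖ = 1 ∧ |deriv (fun t => ‖x t‖) s| = c := by
  intro s hs
  set k := √(c ^ 2 - a ^ 2)
  set b := √(1 - c ^ 2)
  have hk : 0 < k := sqrt_pos.2 (by nlinarith)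
  have hk2 : k ^ 2 = c ^ 2 - a ^ 2 := sq_sqrt (by nlinarith)
  have hb2 : b ^ 2 = 1 - c ^ 2 := sq_sqrt (by nlinarith)
  have hx_eq : x = conicalSpiral k (b / k) a := funext hx
  have hspeed : k ^ 2 * (1 + (b / k) ^ 2) + a ^ 2 = 1 := by
    field_simp
    linear_combination hk2 + hb2
  have hcone : √(k ^ 2 + a ^ 2) = c := by
    rw [hk2, sub_add_cancel, sqrt_sq (ha.trans hac.le)]
  rw [hx_eq]
  exact ⟨by rw [norm_deriv_conicalSpiral _ _ _ hs, hspeed, sqrt_one],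
    by rw [deriv_norm_conicalSpiral _ _ _ hs, hcone, abs_of_pos (ha.trans_lt hac)]⟩
end

section
/- Let x : I → ℝⁿ be a unit speed regular curve with ρ(s) = ‖x(s)‖ > 0 satisfying |ρ'(s)| = 1 for all s. Then x(I) is an open portion of a straight line through the origin. -/
/-!
Differentiating `ρ² = ⟪x, x⟫` gives `⟪x, x'⟫ = ρ ρ'`, so `|ρ'| = 1 = ‖x'‖` is the equality case of
Cauchy–Schwarz and forces `ρ x' = ρ' x`. This is exactly the vanishing of the derivative of the
unit vector `x / ρ`, which is therefore constant on the interval.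
-/

section

variable {E : Type*} [NormedAddCommGroup E] [InnerProductSpace ℝ E]

open RealInnerProductSpace

lemma inner_eq_mul_norm_of_hasDerivAt {x : ℝ → E} {T : E} {r s : ℝ} (hx : HasDerivAt x T s)
    (hr : HasDerivAt (fun t => ‖x t‖) r s) : ⟪x s, T⟫ = r * ‖x s‖ := by
  have hsq : HasDerivAt (fun t => ‖x t‖ * ‖x t‖) (⟪x s, T⟫ + ⟪T, x s⟫) s := by
    simpa only [real_inner_self_eq_norm_mul_norm] using hx.inner ℝ hx
  have := hsq.unique (hr.mul hr)
  rw [real_inner_comm (x s) T] at this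
  linarith

lemma norm_smul_eq_smul_of_inner_eq_mul_norm {x T : E} {r : ℝ} (hT : ‖T‖ = 1) (hr : |r| = 1)
    (hinner : ⟪x, T⟫ = r * ‖x‖) : ‖x‖ • T = r • x := by
  have hrr : r * r = 1 := by rw [← abs_mul_abs_self, hr, one_mul]
  have hcs : ⟪r • x, T⟫ = ‖r • x‖ * ‖T‖ := by
    rw [real_inner_smul_left, hinner, norm_smul, Real.norm_eq_abs, hr, hT, ← mul_assoc, hrr]
    ring
  rw [inner_eq_norm_mul_iff_real, hT, one_smul, norm_smul, Real.norm_eq_abs, hr, one_mul] at hcs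
  exact hcs.symm

lemma hasDerivAt_inv_norm_smul_eq_zero {x : ℝ → E} {T : E} {r s : ℝ} (hx : HasDerivAt x T s)
    (hr : HasDerivAt (fun t => ‖x t‖) r s) (hxs : x s ≠ 0) (hpar : ‖x s‖ • T = r • x s) :
    HasDerivAt (fun t => ‖x t‖⁻¹ • x t) 0 s := by
  have hρ : ‖x s‖ ≠ 0 := norm_ne_zero_iff.mpr hxs
  have hinv : HasDerivAt (fun t => ‖x t‖⁻¹) (-r / ‖x s‖ ^ 2) s := hr.inv hρ
  refine (hinv.smul hx).congr_deriv ?_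
  have hT : T = (r / ‖x s‖) • x s := by
    rw [div_eq_inv_mul, mul_smul, ← hpar, smul_smul, inv_mul_cancel₀ hρ, one_smul]
  have hcoeff : ‖x s‖⁻¹ * (r / ‖x s‖) + -r / ‖x s‖ ^ 2 = 0 := by
    field_simp
    ring
  rw [hT, smul_smul, ← add_smul, hcoeff, zero_smul]

end

/-- A unit speed curve x on an open interval with ρ = ‖x‖ > 0
and |ρ'| ≡ 1 is an open portion of a line through the origin. -/
theorem stmt6
    (n : ℕ) (α β : ℝ) (x T : ℝ → EuclideanSpace ℝ (Fin n)) (ρ' : ℝ → ℝ)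
    (hT : ∀ s ∈ Set.Ioo α β, HasDerivAt x (T s) s)
    (hunit : ∀ s ∈ Set.Ioo α β, ‖T s‖ = 1)
    (hx0 : ∀ s ∈ Set.Ioo α β, 0 < ‖x s‖)
    (hρ : ∀ s ∈ Set.Ioo α β, HasDerivAt (fun t => ‖x t‖) (ρ' s) s)
    (h1 : ∀ s ∈ Set.Ioo α β, |ρ' s| = 1) :
    ∃ v : EuclideanSpace ℝ (Fin n),
      ∀ s ∈ Set.Ioo α β, ∃ t : ℝ, x s = t • v := by
  have hu : ∀ s ∈ Set.Ioo α β, HasDerivAt (fun t => ‖x t‖⁻¹ • x t) 0 s := fun s hs =>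
    hasDerivAt_inv_norm_smul_eq_zero (hT s hs) (hρ s hs) (norm_pos_iff.mp (hx0 s hs))
      (norm_smul_eq_smul_of_inner_eq_mul_norm (hunit s hs) (h1 s hs)
        (inner_eq_mul_norm_of_hasDerivAt (hT s hs) (hρ s hs)))
  obtain ⟨v, hv⟩ := isOpen_Ioo.exists_is_const_of_deriv_eq_zero isPreconnected_Ioo
    (fun s hs => (hu s hs).differentiableAt.differentiableWithinAt) (fun s hs => (hu s hs).deriv)
  refine ⟨v, fun s hs => ⟨‖x s‖, ?_⟩⟩
  rw [← hv s hs, smul_smul, mul_inv_cancel₀ (hx0 s hs).ne', one_smul]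
end

section
/- Let x : I → ℝ² be a unit speed plane curve with ρ(s) = ‖x(s)‖ = c·s for a constant c ∈ (0,1) (s > 0). Then the curvature κ of x satisfies κ(s)² · c²·(s² + b) = 1 − c² for some real constant b. -/
open scoped RealInnerProductSpace

/-- For a unit speed plane curve with ‖x(s)‖ = c·s, c ∈ (0,1),
the curvature satisfies κ(s)²·c²·(s² + b) = 1 − c² for some constant b. -/
theorem stmt8
    (I : Set ℝ) (x T N : ℝ → EuclideanSpace ℝ (Fin 2)) (κ : ℝ → ℝ) (c : ℝ)
    (hc : c ∈ Set.Ioo (0 : ℝ) 1)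
    (hIpos : ∀ s ∈ I, 0 < s)
    (hI : ∃ α β : ℝ, I = Set.Ioo α β)
    (hT : ∀ s ∈ I, HasDerivAt x (T s) s)
    (hFrenet1 : ∀ s ∈ I, HasDerivAt T (κ s • N s) s)
    (hFrenet2 : ∀ s ∈ I, HasDerivAt N (-(κ s) • T s) s)
    (hTT : ∀ s ∈ I, ⟪T s, T s⟫ = 1)
    (hNN : ∀ s ∈ I, ⟪N s, N s⟫ = 1)
    (hTN : ∀ s ∈ I, ⟪T s, N s⟫ = 0)
    (hρ : ∀ s ∈ I, ‖x s‖ = c * s) :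
    ∃ b : ℝ, ∀ s ∈ I, κ s ^ 2 * (c ^ 2 * (s ^ 2 + b)) = 1 - c ^ 2 := by
  obtain ⟨hc0, hc1⟩ := hc
  obtain ⟨α, β, hIeq⟩ := hI
  have hIopen : IsOpen I := hIeq ▸ isOpen_Ioo
  -- the squared norm function agrees with c²t² on I
  have hxx_eq : ∀ u ∈ I, ⟪x u, x u⟫ = c ^ 2 * u ^ 2 := by
    intro u hu
    rw [real_inner_self_eq_norm_sq, hρ u hu]
    ring
  -- m₀ = c² s on I
  have hm0 : ∀ u ∈ I, ⟪x u, T u⟫ = c ^ 2 * u := by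
    intro u hu
    have h1 : HasDerivAt (fun t => ⟪x t, x t⟫) (⟪x u, T u⟫ + ⟪T u, x u⟫) u :=
      (hT u hu).inner ℝ (hT u hu)
    have h2 : (fun t => ⟪x t, x t⟫) =ᶠ[nhds u] fun t => c ^ 2 * t ^ 2 := by
      filter_upwards [hIopen.mem_nhds hu] with t ht using hxx_eq t ht
    have h3 : HasDerivAt (fun t => c ^ 2 * t ^ 2) (⟪x u, T u⟫ + ⟪T u, x u⟫) u :=
      h1.congr_of_eventuallyEq h2.symm
    have h4 : HasDerivAt (fun t => c ^ 2 * t ^ 2) (c ^ 2 * (2 * u ^ 1)) u :=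
      (hasDerivAt_pow 2 u).const_mul (c ^ 2)
    have h5 := h3.unique h4
    rw [pow_one] at h5
    have h6 : ⟪x u, T u⟫ = ⟪T u, x u⟫ := real_inner_comm _ _
    nlinarith [h5, h6]
  -- κ m₁ = c² - 1 at s
  refine ⟨0, fun s hs => ?_⟩
  have hκm1 : κ s * ⟪x s, N s⟫ = c ^ 2 - 1 := by
    have h1 : HasDerivAt (fun t => ⟪x t, T t⟫)
        (⟪x s, κ s • N s⟫ + ⟪T s, T s⟫) s :=
      (hT s hs).inner ℝ (hFrenet1 s hs)
    have h2 : (fun t => ⟪x t, T t⟫) =ᶠ[nhds s] fun t => c ^ 2 * t := by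
      filter_upwards [hIopen.mem_nhds hs] with t ht using hm0 t ht
    have h3 : HasDerivAt (fun t => c ^ 2 * t) (⟪x s, κ s • N s⟫ + ⟪T s, T s⟫) s :=
      h1.congr_of_eventuallyEq h2.symm
    have h4 : HasDerivAt (fun t : ℝ => c ^ 2 * t) (c ^ 2) s := by
      simpa using (hasDerivAt_id s).const_mul (c ^ 2)
    have h5 := h3.unique h4
    rw [real_inner_smul_right, hTT s hs] at h5
    nlinarith [h5]
  -- Pythagoras: m₀² + m₁² = c² s²
  have hNT : ⟪N s, T s⟫ = 0 := by rw [real_inner_comm]; exact hTN s hs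
  have hON : Orthonormal ℝ ![T s, N s] := by
    rw [orthonormal_iff_ite]
    intro i j
    fin_cases i <;> fin_cases j <;>
      simp only [Matrix.cons_val_zero, Matrix.cons_val_one, Matrix.head_cons] <;>
      norm_num [hTT s hs, hNN s hs, hTN s hs, hNT,
        (by rw [norm_eq_sqrt_real_inner, hTT s hs, Real.sqrt_one] : ‖T s‖ = 1),
        (by rw [norm_eq_sqrt_real_inner, hNN s hs, Real.sqrt_one] : ‖N s‖ = 1)]
  have hcard : Fintype.card (Fin 2) = Module.finrank ℝ (EuclideanSpace ℝ (Fin 2)) := by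
    simp
  have hON' : Orthonormal ℝ ⇑(basisOfOrthonormalOfCardEqFinrank hON hcard) := by
    rwa [coe_basisOfOrthonormalOfCardEqFinrank]
  let b : OrthonormalBasis (Fin 2) ℝ (EuclideanSpace ℝ (Fin 2)) :=
    (basisOfOrthonormalOfCardEqFinrank hON hcard).toOrthonormalBasis hON'
  have hb : ∀ i, b i = ![T s, N s] i := by
    intro i
    show ((basisOfOrthonormalOfCardEqFinrank hON hcard).toOrthonormalBasis hON' : Fin 2 → _) i
      = _
    rw [Module.Basis.coe_toOrthonormalBasis, coe_basisOfOrthonormalOfCardEqFinrank]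
  have hsum := b.sum_inner_mul_inner (x s) (x s)
  rw [Fin.sum_univ_two, hb 0, hb 1] at hsum
  simp only [Matrix.cons_val_zero, Matrix.cons_val_one, Matrix.head_cons] at hsum
  rw [real_inner_comm (x s) (T s), real_inner_comm (x s) (N s), hxx_eq s hs,
    hm0 s hs] at hsum
  -- conclude
  have h1c : (0:ℝ) < 1 - c ^ 2 := by nlinarith
  have key : (1 - c ^ 2) * (κ s ^ 2 * (c ^ 2 * (s ^ 2 + 0))) = (1 - c ^ 2) * (1 - c ^ 2) := by
    nlinarith [hκm1, hsum, sq_nonneg (κ s), sq_nonneg (⟪x s, N s⟫)]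
  exact mul_left_cancel₀ (ne_of_gt h1c) key
end

section
/- Let x : I → ℝ³ be a unit speed twisted curve (κ₁ > 0, κ₂ ≠ 0) of constant ratio with ⟨x(s), T(s)⟩ = c²s + cb for constants c ∈ [0,1), b ∈ ℝ. Then the position vector of x is x(s) = (c²s + cb)T(s) + ((c²−1)/κ₁)N₁(s) + (κ₁·c(cs + b)/κ₂ − (c²−1)κ₁'/(κ₂κ₁²))N₂(s). -/
open scoped RealInnerProductSpace

/-!
Differentiating the components `m₀ = ⟪x, T⟫` and `m₁ = ⟪x, N₁⟫` of the position vector with the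
Frenet equations gives `m₀' = 1 + κ₁ m₁` and `m₁' = -κ₁ m₀ + κ₂ m₂`. Since `m₀ = c²s + cb` on
the open interval `I`, the first equation determines `m₁ = (c² - 1)/κ₁`, and then the second one
determines `m₂`. Expanding `x` in the orthonormal frame `T, N₁, N₂` gives the formula.
-/

open Module Set

theorem HasDerivAt.unique_of_eqOn {F : Type*} [NormedAddCommGroup F] [NormedSpace ℝ F]
    {f g : ℝ → F} {f' g' : F} {s : ℝ} {U : Set ℝ} (hU : IsOpen U) (hfg : EqOn f g U) (hs : s ∈ U)
    (hf : HasDerivAt f f' s) (hg : HasDerivAt g g' s) : f' = g' :=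
  hf.unique (hg.congr_of_eventuallyEq (Filter.eventuallyEq_of_mem (hU.mem_nhds hs) hfg))

section Frame

variable {𝕜 E : Type*} [RCLike 𝕜] [NormedAddCommGroup E] [InnerProductSpace 𝕜 E]

theorem Orthonormal.sum_inner_smul_eq_of_card_eq_finrank {ι : Type*} [Fintype ι] [Nonempty ι]
    {v : ι → E} (hv : Orthonormal 𝕜 v) (card_eq : Fintype.card ι = finrank 𝕜 E) (x : E) :
    ∑ i, inner 𝕜 (v i) x • v i = x := by
  let B := (basisOfOrthonormalOfCardEqFinrank hv card_eq).toOrthonormalBasis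
    (by rwa [coe_basisOfOrthonormalOfCardEqFinrank])
  have hB : ⇑B = v := by
    rw [Module.Basis.coe_toOrthonormalBasis, coe_basisOfOrthonormalOfCardEqFinrank]
  simpa only [hB] using B.sum_repr' x

end Frame

section Frenet

variable {E : Type*} [NormedAddCommGroup E] [InnerProductSpace ℝ E]

theorem orthonormal_three_of_inner {u v w : E} (huu : ⟪u, u⟫ = 1) (hvv : ⟪v, v⟫ = 1)
    (hww : ⟪w, w⟫ = 1) (huv : ⟪u, v⟫ = 0) (huw : ⟪u, w⟫ = 0) (hvw : ⟪v, w⟫ = 0) :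
    Orthonormal ℝ ![u, v, w] := by
  have norm_one {y : E} (hy : ⟪y, y⟫ = 1) : ‖y‖ = 1 := by
    rw [norm_eq_sqrt_real_inner, hy, Real.sqrt_one]
  simp [orthonormal_vecCons_iff, Fin.forall_fin_two, norm_one huu, norm_one hvv, norm_one hww, huv,
    huw, hvw]

theorem eq_inner_smul_add_inner_smul_add_inner_smul {u v w : E} (h : Orthonormal ℝ ![u, v, w])
    (hE : finrank ℝ E = 3) (x : E) :
    x = ⟪x, u⟫ • u + ⟪x, v⟫ • v + ⟪x, w⟫ • w := by
  have := h.sum_inner_smul_eq_of_card_eq_finrank (by simp [hE]) x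
  simpa [Fin.sum_univ_three, real_inner_comm x] using this.symm

variable {x T N₁ N₂ : ℝ → E} {κ₁ κ₂ : ℝ → ℝ} {s : ℝ}

theorem hasDerivAt_inner_tangent (hx : HasDerivAt x (T s) s)
    (hT : HasDerivAt T (κ₁ s • N₁ s) s) (hTT : ⟪T s, T s⟫ = 1) :
    HasDerivAt (fun t ↦ ⟪x t, T t⟫) (1 + κ₁ s * ⟪x s, N₁ s⟫) s := by
  refine (hx.inner ℝ hT).congr_deriv ?_
  rw [real_inner_smul_right, hTT]
  ring

theorem hasDerivAt_inner_normal (hx : HasDerivAt x (T s) s)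
    (hN₁ : HasDerivAt N₁ (-(κ₁ s) • T s + κ₂ s • N₂ s) s) (hTN₁ : ⟪T s, N₁ s⟫ = 0) :
    HasDerivAt (fun t ↦ ⟪x t, N₁ t⟫) (-κ₁ s * ⟪x s, T s⟫ + κ₂ s * ⟪x s, N₂ s⟫) s := by
  refine (hx.inner ℝ hN₁).congr_deriv ?_
  rw [inner_add_right, real_inner_smul_right, real_inner_smul_right, hTN₁]
  ring

end Frenet

theorem stmt9_general
    (I : Set ℝ) (x T N₁ N₂ : ℝ → EuclideanSpace ℝ (Fin 3))
    (κ₁ κ₂ κ₁' : ℝ → ℝ) (c b : ℝ)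
    (hT : ∀ s ∈ I, HasDerivAt x (T s) s)
    (hFrenet1 : ∀ s ∈ I, HasDerivAt T (κ₁ s • N₁ s) s)
    (hFrenet2 : ∀ s ∈ I, HasDerivAt N₁ (-(κ₁ s) • T s + κ₂ s • N₂ s) s)
    (hκ₁pos : ∀ s ∈ I, 0 < κ₁ s)
    (hκ₂ne : ∀ s ∈ I, κ₂ s ≠ 0)
    (hκ₁' : ∀ s ∈ I, HasDerivAt κ₁ (κ₁' s) s)
    (hTT : ∀ s ∈ I, ⟪T s, T s⟫ = 1)
    (hN₁N₁ : ∀ s ∈ I, ⟪N₁ s, N₁ s⟫ = 1)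
    (hN₂N₂ : ∀ s ∈ I, ⟪N₂ s, N₂ s⟫ = 1)
    (hTN₁ : ∀ s ∈ I, ⟪T s, N₁ s⟫ = 0)
    (hTN₂ : ∀ s ∈ I, ⟪T s, N₂ s⟫ = 0)
    (hN₁N₂ : ∀ s ∈ I, ⟪N₁ s, N₂ s⟫ = 0)
    (hI : ∃ α β : ℝ, I = Set.Ioo α β)
    (hcr : ∀ s ∈ I, ⟪x s, T s⟫ = c ^ 2 * s + c * b) :
    ∀ s ∈ I,
      x s = (c ^ 2 * s + c * b) • T s
        + ((c ^ 2 - 1) / κ₁ s) • N₁ s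
        + (κ₁ s * c * (c * s + b) / κ₂ s
            - (c ^ 2 - 1) * κ₁' s / (κ₂ s * (κ₁ s) ^ 2)) • N₂ s := by
  obtain ⟨α, β, rfl⟩ := hI
  have hm₁ : ∀ s ∈ Ioo α β, ⟪x s, N₁ s⟫ = (c ^ 2 - 1) / κ₁ s := by
    intro s hs
    have hm₀' : HasDerivAt (fun t ↦ c ^ 2 * t + c * b) (c ^ 2) s := by
      simpa using ((hasDerivAt_id s).const_mul (c ^ 2)).add_const (c * b)
    have h := HasDerivAt.unique_of_eqOn isOpen_Ioo hcr hs
      (hasDerivAt_inner_tangent (hT s hs) (hFrenet1 s hs) (hTT s hs)) hm₀'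
    rw [eq_div_iff (hκ₁pos s hs).ne']
    linarith
  intro s hs
  have hκ₁ := (hκ₁pos s hs).ne'
  have hm₁' : HasDerivAt (fun t ↦ (c ^ 2 - 1) / κ₁ t) (-((c ^ 2 - 1) * κ₁' s) / κ₁ s ^ 2) s :=
    ((hasDerivAt_const s (c ^ 2 - 1)).div (hκ₁' s hs) hκ₁).congr_deriv (by ring)
  have hm₂ : ⟪x s, N₂ s⟫ = κ₁ s * c * (c * s + b) / κ₂ s
      - (c ^ 2 - 1) * κ₁' s / (κ₂ s * (κ₁ s) ^ 2) := by
    have h := HasDerivAt.unique_of_eqOn isOpen_Ioo hm₁ hs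
      (hasDerivAt_inner_normal (hT s hs) (hFrenet2 s hs) (hTN₁ s hs)) hm₁'
    rw [hcr s hs, eq_div_iff (pow_ne_zero 2 hκ₁)] at h
    field_simp [hκ₁, hκ₂ne s hs]
    linear_combination h
  have hframe := orthonormal_three_of_inner (hTT s hs) (hN₁N₁ s hs) (hN₂N₂ s hs) (hTN₁ s hs)
    (hTN₂ s hs) (hN₁N₂ s hs)
  rw [eq_inner_smul_add_inner_smul_add_inner_smul hframe finrank_euclideanSpace_fin (x s),
    hcr s hs, hm₁ s hs, hm₂]

/-- A unit speed twisted curve of constant ratio with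
⟨x, T⟩ = c²s + cb has position vector
x = (c²s + cb)T + ((c²−1)/κ₁)N₁ + (κ₁c(cs+b)/κ₂ − (c²−1)κ₁'/(κ₂κ₁²))N₂. -/
theorem stmt9
    (I : Set ℝ) (x T N₁ N₂ : ℝ → EuclideanSpace ℝ (Fin 3))
    (κ₁ κ₂ κ₁' : ℝ → ℝ) (c b : ℝ)
    (hc : c ∈ Set.Ico (0 : ℝ) 1)
    (hT : ∀ s ∈ I, HasDerivAt x (T s) s)
    (hFrenet1 : ∀ s ∈ I, HasDerivAt T (κ₁ s • N₁ s) s)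
    (hFrenet2 : ∀ s ∈ I, HasDerivAt N₁ (-(κ₁ s) • T s + κ₂ s • N₂ s) s)
    (hFrenet3 : ∀ s ∈ I, HasDerivAt N₂ (-(κ₂ s) • N₁ s) s)
    (hκ₁pos : ∀ s ∈ I, 0 < κ₁ s)
    (hκ₂ne : ∀ s ∈ I, κ₂ s ≠ 0)
    (hκ₁' : ∀ s ∈ I, HasDerivAt κ₁ (κ₁' s) s)
    (hTT : ∀ s ∈ I, ⟪T s, T s⟫ = 1)
    (hN₁N₁ : ∀ s ∈ I, ⟪N₁ s, N₁ s⟫ = 1)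
    (hN₂N₂ : ∀ s ∈ I, ⟪N₂ s, N₂ s⟫ = 1)
    (hTN₁ : ∀ s ∈ I, ⟪T s, N₁ s⟫ = 0)
    (hTN₂ : ∀ s ∈ I, ⟪T s, N₂ s⟫ = 0)
    (hN₁N₂ : ∀ s ∈ I, ⟪N₁ s, N₂ s⟫ = 0)
    (hI : ∃ α β : ℝ, I = Set.Ioo α β)
    (hcr : ∀ s ∈ I, ⟪x s, T s⟫ = c ^ 2 * s + c * b) :
    ∀ s ∈ I,
      x s = (c ^ 2 * s + c * b) • T s
        + ((c ^ 2 - 1) / κ₁ s) • N₁ s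
        + (κ₁ s * c * (c * s + b) / κ₂ s
            - (c ^ 2 - 1) * κ₁' s / (κ₂ s * (κ₁ s) ^ 2)) • N₂ s :=
  stmt9_general I x T N₁ N₂ κ₁ κ₂ κ₁' c b hT hFrenet1 hFrenet2 hκ₁pos hκ₂ne hκ₁' hTT hN₁N₁ hN₂N₂
    hTN₁ hTN₂ hN₁N₂ hI hcr
end

section
/- Let x : I → ℝ³ be an N-constant twisted curve of the second kind with κ₁ > 0, κ₂ ≠ 0 (so x(s) = (s+λ)T(s) + μN₂(s) with μ ≠ 0). Then the ratio of curvatures is a nonconstant linear function of arclength: κ₂(s)/κ₁(s) = (s + λ)/μ. -/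
open scoped RealInnerProductSpace

/-- For an N-constant twisted curve of the second kind, with
position vector x(s) = (s + l)T(s) + μN₂(s), μ ≠ 0, the ratio of curvatures
is the nonconstant linear function κ₂/κ₁ = (s + l)/μ. -/
theorem stmt18
    (I : Set ℝ) (x T N₁ N₂ : ℝ → EuclideanSpace ℝ (Fin 3))
    (κ₁ κ₂ : ℝ → ℝ) (l μ : ℝ) (hμ : μ ≠ 0)
    (hT : ∀ s ∈ I, HasDerivAt x (T s) s)
    (hFrenet1 : ∀ s ∈ I, HasDerivAt T (κ₁ s • N₁ s) s)
    (hFrenet2 : ∀ s ∈ I, HasDerivAt N₁ (-(κ₁ s) • T s + κ₂ s • N₂ s) s)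
    (hFrenet3 : ∀ s ∈ I, HasDerivAt N₂ (-(κ₂ s) • N₁ s) s)
    (hκ₁pos : ∀ s ∈ I, 0 < κ₁ s)
    (hκ₂ne : ∀ s ∈ I, κ₂ s ≠ 0)
    (hTT : ∀ s ∈ I, ⟪T s, T s⟫ = 1)
    (hN₁N₁ : ∀ s ∈ I, ⟪N₁ s, N₁ s⟫ = 1)
    (hN₂N₂ : ∀ s ∈ I, ⟪N₂ s, N₂ s⟫ = 1)
    (hTN₁ : ∀ s ∈ I, ⟪T s, N₁ s⟫ = 0)
    (hTN₂ : ∀ s ∈ I, ⟪T s, N₂ s⟫ = 0)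
    (hN₁N₂ : ∀ s ∈ I, ⟪N₁ s, N₂ s⟫ = 0)
    (hI : ∃ α β : ℝ, I = Set.Ioo α β)
    (hrect : ∀ s ∈ I, x s = (s + l) • T s + μ • N₂ s) :
    ∀ s ∈ I, κ₂ s / κ₁ s = (s + l) / μ := by
  obtain ⟨α, β, rfl⟩ := hI
  intro s hs
  have hmem : Set.Ioo α β ∈ nhds s := isOpen_Ioo.mem_nhds hs
  -- derivative of the right-hand side
  have h1 : HasDerivAt (fun t => (t + l) • T t)
      ((s + l) • (κ₁ s • N₁ s) + (1 : ℝ) • T s) s :=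
    ((hasDerivAt_id s).add_const l).smul (hFrenet1 s hs)
  have h2 : HasDerivAt (fun t => μ • N₂ t) (μ • (-(κ₂ s) • N₁ s)) s :=
    (hFrenet3 s hs).const_smul μ
  have hg : HasDerivAt (fun t => (t + l) • T t + μ • N₂ t)
      ((s + l) • (κ₁ s • N₁ s) + (1 : ℝ) • T s + μ • (-(κ₂ s) • N₁ s)) s := h1.add h2
  have heq : x =ᶠ[nhds s] (fun t => (t + l) • T t + μ • N₂ t) :=
    Filter.eventuallyEq_of_mem hmem (fun t ht => hrect t ht)
  have hx2 : HasDerivAt x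
      ((s + l) • (κ₁ s • N₁ s) + (1 : ℝ) • T s + μ • (-(κ₂ s) • N₁ s)) s :=
    hg.congr_of_eventuallyEq heq
  have huniq := (hT s hs).unique hx2
  have hzero : ((s + l) * κ₁ s - μ * κ₂ s) • N₁ s = 0 := by
    have := huniq
    rw [one_smul] at this
    have h3 : (s + l) • (κ₁ s • N₁ s) + μ • (-(κ₂ s) • N₁ s) = 0 := by
      have := this.symm
      abel_nf at this ⊢
      linear_combination (norm := module) this
    rw [smul_smul, smul_smul, sub_smul] at *
    rw [← h3]
    module
  have hc : (s + l) * κ₁ s - μ * κ₂ s = 0 := by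
    have hin := congrArg (fun v => ⟪N₁ s, v⟫) hzero
    simp only [inner_smul_right, inner_zero_right, hN₁N₁ s hs, mul_one] at hin
    exact hin
  have hk1 := (hκ₁pos s hs).ne'
  field_simp
  nlinarith [hc]
end
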